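/- arXiv:2605.22700 — 14 statements merged into one kernel-verified Lean document; each statement's English description precedes it below -/
import Mathlib

section
/- A nontrivial ring R (with identity, not necessarily commutative) is a local ring (i.e., for every a ∈ R, either a or 1 - a is a unit) if and only if every element of R is either a unit or belongs to Δ(R). -/
/-- `Δ(R) = {r ∈ R : r + u is a unit for every unit u}`. -/
def Delta (R : Type*) [Ring R] : Set R :=
  {r : R | ∀ u : R, IsUnit u → IsUnit (r + u)}

/-- `R` is a weakly ΔU-ring: every unit is `1 + d` or `-1 + d` with `d ∈ Δ(R)`. -/
def IsWDU (R : Type*) [Ring R] : Prop :=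
  ∀ u : R, IsUnit u → ∃ d ∈ Delta R, u = 1 + d ∨ u = -1 + d

/-- `R` is a ΔU-ring: every unit is `1 + d` with `d ∈ Δ(R)`. -/
def IsDU (R : Type*) [Ring R] : Prop :=
  ∀ u : R, IsUnit u → ∃ d ∈ Delta R, u = 1 + d

/-- A nontrivial ring `R` is local (for every `a`, either `a` or `1 - a` is a
unit) iff every element of `R` is either a unit or belongs to `Δ(R)`. -/
theorem stmt_0 (R : Type*) [Ring R] [Nontrivial R] :
    (∀ a : R, IsUnit a ∨ IsUnit (1 - a)) ↔ (∀ a : R, IsUnit a ∨ a ∈ Delta R) := by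
  constructor
  · intro h a
    by_cases ha : IsUnit a
    · exact Or.inl ha
    · refine Or.inr (fun u hu => ?_)
      obtain ⟨v, rfl⟩ := hu
      rcases h (-(a * ↑v⁻¹)) with h2 | h2
      · exact absurd (by simpa [mul_assoc] using (h2.neg.mul v.isUnit)) ha
      · have h3 : IsUnit ((1 + a * ↑v⁻¹) * ↑v) := by
          have : (1 : R) - -(a * ↑v⁻¹) = 1 + a * ↑v⁻¹ := by noncomm_ring
          exact (this ▸ h2).mul v.isUnit
        simpa [add_mul, mul_assoc, add_comm] using h3
  · intro h a
    rcases h a with ha | ha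
    · exact Or.inl ha
    · have := ha (-1) isUnit_one.neg
      right
      have e : (1 : R) - a = -(a + -1) := by noncomm_ring
      rw [e]
      exact this.neg
end

section
/- Let R be a ring such that every element of R is a unit, or belongs to Δ(R), or is an idempotent. Then one of the following holds: (1) R is a local ring; (2) R is a Boolean ring (every element is idempotent); (3) R is a non-abelian Dedekind-finite ring of characteristic 2. -/
section Aux

variable {R : Type*} [Ring R]

lemma unit_mul_eq_zero' {u x : R} (hu : IsUnit u) (hx : u * x = 0) : x = 0 := by
  obtain ⟨v, rfl⟩ := hu
  calc x = ↑v⁻¹ * (↑v * x) := by rw [← mul_assoc]; simp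
  _ = 0 := by rw [hx, mul_zero]

lemma twog (h : ∀ a : R, IsUnit a ∨ a ∈ Delta R ∨ IsIdempotentElem a)
    {g : R} (hg : IsIdempotentElem g) (h0 : g ≠ 0) (h1 : g ≠ 1) : 2 * g = 2 := by
  have hgg : g * g = g := hg
  rcases h (g - 1) with hu | hd | hi
  · exfalso
    have h5 : (g - 1) * g = 0 := by
      have : (g - 1) * g = g * g - g := by noncomm_ring
      rw [this, hgg, sub_self]
    exact h0 (unit_mul_eq_zero' hu h5)
  · exfalso
    have hgu : IsUnit g := by
      have := hd 1 isUnit_one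
      simpa using this
    have h5 : g * (g - 1) = 0 := by
      have : g * (g - 1) = g * g - g := by noncomm_ring
      rw [this, hgg, sub_self]
    have := unit_mul_eq_zero' hgu h5
    exact h1 (by rwa [sub_eq_zero] at this)
  · have hi' : (g - 1) * (g - 1) = g - 1 := hi
    have expand : (g - 1) * (g - 1) = g * g - g - g + 1 := by noncomm_ring
    rw [expand, hgg] at hi'
    -- hi' : g - g - g + 1 = g - 1
    have z0 : (g + g) - (1 + 1) = -((g - g - g + 1) - (g - 1)) := by abel
    have z1 : (g + g) - (1 + 1) = 0 := by rw [z0, hi']; simp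
    rw [two_mul, ← one_add_one_eq_two]
    rw [sub_eq_zero] at z1
    exact z1

lemma charTwo (h : ∀ a : R, IsUnit a ∨ a ∈ Delta R ∨ IsIdempotentElem a)
    {e : R} (he : IsIdempotentElem e) (h0 : e ≠ 0) (h1 : e ≠ 1) : (2 : R) = 0 := by
  have t1 := twog h he h0 h1
  have f0 : (1 : R) - e ≠ 0 := fun h' => h1 (by rw [sub_eq_zero] at h'; exact h'.symm)
  have f1 : (1 : R) - e ≠ 1 := fun h' => h0 (by
    have : (1 : R) - e - 1 = 0 := by rw [h']; exact sub_self 1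
    have h2 : -e = (0 : R) := by rw [← this]; noncomm_ring
    simpa using congrArg Neg.neg h2)
  have t2 := twog h he.one_sub f0 f1
  calc (2 : R) = 2 * (1 - e) := t2.symm
    _ = 2 - 2 * e := by rw [mul_sub, mul_one]
    _ = 2 - 2 := by rw [t1]
    _ = 0 := sub_self 2

lemma dedekindFinite (h : ∀ a : R, IsUnit a ∨ a ∈ Delta R ∨ IsIdempotentElem a) :
    ∀ a b : R, a * b = 1 → b * a = 1 := by
  intro a b hab
  have ua : IsUnit a → b * a = 1 := by
    rintro ⟨u, rfl⟩
    have hb : b = ↑u⁻¹ := by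
      calc b = ↑u⁻¹ * (↑u * b) := by rw [← mul_assoc]; simp
      _ = ↑u⁻¹ := by rw [hab, mul_one]
    rw [hb]; simp
  rcases h a with ha | ha | ha
  · exact ua ha
  · rcases h b with hb | hb | hb
    · obtain ⟨v, rfl⟩ := hb
      have hA : a = ↑v⁻¹ := by
        calc a = (a * ↑v) * ↑v⁻¹ := by rw [mul_assoc]; simp
        _ = ↑v⁻¹ := by rw [hab, one_mul]
      rw [hA]; simp
    · -- both in Δ
      have h1 : IsUnit (a + 1) := ha 1 isUnit_one
      have h2 : IsUnit (b + 1) := hb 1 isUnit_one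
      have h3 : a * (b + 1) = a + 1 := by rw [mul_add, mul_one, hab, add_comm]
      have h4 : IsUnit (a * (b + 1)) := h3 ▸ h1
      obtain ⟨v, hv⟩ := h4
      obtain ⟨w, hw⟩ := h2
      have hA : a = ↑v * ↑w⁻¹ := by
        calc a = (a * ↑w) * ↑w⁻¹ := by rw [mul_assoc]; simp
        _ = ↑v * ↑w⁻¹ := by rw [hw, hv]
      exact ua ⟨v * w⁻¹, by rw [hA]; simp⟩
    · -- b idempotent ⇒ b = 1 ⇒ a = 1
      have hb1 : b = 1 := by
        calc b = 1 * b := (one_mul b).symm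
          _ = (a * b) * b := by rw [hab]
          _ = a * (b * b) := by rw [mul_assoc]
          _ = a * b := by rw [hb]
          _ = 1 := hab
      rw [hb1] at hab ⊢
      rw [mul_one] at hab
      rw [hab, one_mul]
  · -- a idempotent ⇒ a = 1
    have ha1 : a = 1 := by
      calc a = a * 1 := (mul_one a).symm
        _ = a * (a * b) := by rw [hab]
        _ = (a * a) * b := by rw [mul_assoc]
        _ = a * b := by rw [ha]
        _ = 1 := hab
    rw [ha1] at hab ⊢
    rw [one_mul] at hab
    rw [hab, mul_one]

lemma corner (h : ∀ a : R, IsUnit a ∨ a ∈ Delta R ∨ IsIdempotentElem a)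
    {e : R} (he : IsIdempotentElem e) (hc : ∀ r : R, e * r = r * e)
    (h0 : e ≠ 0) (h1 : (1 : R) - e ≠ 0) (a : R) : (e * a) * (e * a) = e * a := by
  have hee : e * e = e := he
  have key1 : (e * a) * (1 - e) = 0 := by
    have he1 : e * a * e = e * a := by
      calc e * a * e = e * (a * e) := by rw [mul_assoc]
        _ = e * (e * a) := by rw [← hc a]
        _ = (e * e) * a := by rw [mul_assoc]
        _ = e * a := by rw [hee]
    calc e * a * (1 - e) = e * a - e * a * e := by noncomm_ring
      _ = 0 := by rw [he1, sub_self]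
  rcases h (e * a) with hu | hd | hi
  · exact absurd (unit_mul_eq_zero' hu key1) h1
  · rcases h (e * a + (1 - e)) with hb | hb | hb
    · -- b unit
      have h4 : IsUnit (e * a + -(e * a + (1 - e))) := hd _ hb.neg
      have h5 : e * a + -(e * a + (1 - e)) = e - 1 := by noncomm_ring
      rw [h5] at h4
      have h6 : (e - 1) * e = 0 := by
        calc (e - 1) * e = e * e - e := by noncomm_ring
          _ = 0 := by rw [hee, sub_self]
      exact absurd (unit_mul_eq_zero' h4 h6) h0
    · -- b ∈ Δ
      have h4 : IsUnit (e * a + (1 - e) + -1) := hb (-1) isUnit_one.neg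
      have h5 : e * a + (1 - e) + -1 = e * a - e := by noncomm_ring
      rw [h5] at h4
      have h6 : (e * a - e) * (1 - e) = 0 := by
        calc (e * a - e) * (1 - e) = e * a * (1 - e) - (e - e * e) := by noncomm_ring
          _ = 0 := by rw [key1, hee]; simp
      exact absurd (unit_mul_eq_zero' h4 h6) h1
    · -- b idempotent
      have h6 : (1 - e) * (e * a) = 0 := by
        calc (1 - e) * (e * a) = (e - e * e) * a := by noncomm_ring
          _ = 0 := by rw [hee]; simp
      have h7 : (1 - e) * (1 - e) = 1 - e := he.one_sub
      have hb' : (e * a + (1 - e)) * (e * a + (1 - e)) = e * a + (1 - e) := hb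
      have h8 : (e * a + (1 - e)) * (e * a + (1 - e)) =
          (e * a) * (e * a) + (e * a) * (1 - e) + (1 - e) * (e * a) + (1 - e) * (1 - e) := by
        noncomm_ring
      rw [h8, key1, h6, h7, add_zero, add_zero] at hb'
      exact add_right_cancel hb'
  · exact hi

lemma boolean (h : ∀ a : R, IsUnit a ∨ a ∈ Delta R ∨ IsIdempotentElem a)
    {e : R} (he : IsIdempotentElem e) (hc : ∀ r : R, e * r = r * e)
    (h0 : e ≠ 0) (h1 : (1 : R) - e ≠ 0) : ∀ a : R, IsIdempotentElem a := by
  intro a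
  have c1 := corner h he hc h0 h1 a
  have hc' : ∀ r : R, (1 - e) * r = r * (1 - e) := by
    intro r
    calc (1 - e) * r = r - e * r := by noncomm_ring
      _ = r - r * e := by rw [hc r]
      _ = r * (1 - e) := by noncomm_ring
  have h1' : (1 : R) - (1 - e) ≠ 0 := by
    rw [sub_sub_cancel]; exact h0
  have c2 := corner h he.one_sub hc' h1 h1' a
  have hee : e * e = e := he
  have k1 : e * (a * a) = (e * a) * (e * a) := by
    calc e * (a * a) = (e * e) * (a * a) := by rw [hee]
      _ = e * (e * (a * a)) := by rw [mul_assoc]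
      _ = e * ((e * a) * a) := by rw [mul_assoc]
      _ = e * ((a * e) * a) := by rw [hc a]
      _ = e * (a * (e * a)) := by rw [mul_assoc]
      _ = (e * a) * (e * a) := by rw [mul_assoc]
  have hee' : (1 - e) * (1 - e) = 1 - e := he.one_sub
  have k2 : (1 - e) * (a * a) = ((1 - e) * a) * ((1 - e) * a) := by
    calc (1 - e) * (a * a) = ((1 - e) * (1 - e)) * (a * a) := by rw [hee']
      _ = (1 - e) * ((1 - e) * (a * a)) := by rw [mul_assoc]
      _ = (1 - e) * (((1 - e) * a) * a) := by rw [mul_assoc]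
      _ = (1 - e) * ((a * (1 - e)) * a) := by rw [hc' a]
      _ = (1 - e) * (a * ((1 - e) * a)) := by rw [mul_assoc]
      _ = ((1 - e) * a) * ((1 - e) * a) := by rw [mul_assoc]
  show a * a = a
  calc a * a = e * (a * a) + (1 - e) * (a * a) := by noncomm_ring
    _ = (e * a) * (e * a) + ((1 - e) * a) * ((1 - e) * a) := by rw [k1, k2]
    _ = e * a + (1 - e) * a := by rw [c1, c2]
    _ = a := by noncomm_ring

end Aux

/-- If every element of `R` is a unit, lies in `Δ(R)`, or is idempotent, then
`R` is local, or Boolean, or a non-abelian Dedekind-finite ring of characteristic 2. -/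
theorem stmt_1 (R : Type*) [Ring R]
    (h : ∀ a : R, IsUnit a ∨ a ∈ Delta R ∨ IsIdempotentElem a) :
    (Nontrivial R ∧ ∀ a : R, IsUnit a ∨ IsUnit (1 - a)) ∨
    (∀ a : R, IsIdempotentElem a) ∨
    ((¬ ∀ e : R, IsIdempotentElem e → ∀ r : R, e * r = r * e) ∧
      (∀ a b : R, a * b = 1 → b * a = 1) ∧ (2 : R) = 0) := by
  by_cases hnt : Nontrivial R
  · by_cases hloc : ∀ a : R, IsUnit a ∨ IsUnit (1 - a)
    · exact Or.inl ⟨hnt, hloc⟩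
    · push_neg at hloc
      obtain ⟨a, hau, hau'⟩ := hloc
      have hai : IsIdempotentElem a := by
        rcases h a with h' | h' | h'
        · exact absurd h' hau
        · exfalso
          have := h' (-1) isUnit_one.neg
          have h2 : (1 : R) - a = -(a + -1) := by noncomm_ring
          exact hau' (h2 ▸ this.neg)
        · exact h'
      have h0 : a ≠ 0 := by
        rintro rfl
        exact hau' (by simp)
      have h1 : (1 : R) - a ≠ 0 := by
        intro h'
        rw [sub_eq_zero] at h'
        exact hau (h' ▸ isUnit_one)
      by_cases hab : ∀ e : R, IsIdempotentElem e → ∀ r : R, e * r = r * e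
      · exact Or.inr (Or.inl (boolean h hai (hab a hai) h0 h1))
      · refine Or.inr (Or.inr ⟨hab, dedekindFinite h, ?_⟩)
        push_neg at hab
        obtain ⟨f, hf, r, hr⟩ := hab
        have f0 : f ≠ 0 := by rintro rfl; simp at hr
        have f1 : f ≠ 1 := by rintro rfl; simp at hr
        exact charTwo h hf f0 f1
  · refine Or.inr (Or.inl fun a => ?_)
    rw [not_nontrivial_iff_subsingleton] at hnt
    exact Subsingleton.elim _ _
end

section
/- Let R be a ring and let I be a two-sided ideal of R contained in the Jacobson radical J(R). Then R is a weakly ΔU-ring if and only if the quotient ring R/I is a weakly ΔU-ring. -/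
section Aux

variable {R : Type*} [Ring R] (I : TwoSidedIdeal R)
  (hI : ∀ x ∈ I, ∀ y : R, IsUnit (1 - y * x))

/-- Surjectivity of the quotient map. -/
lemma quot_surj (v : I.ringCon.Quotient) : ∃ a : R, (a : I.ringCon.Quotient) = v :=
  Quotient.mk''_surjective v

lemma isUnit_coe_of_isUnit {a : R} (h : IsUnit a) : IsUnit (a : I.ringCon.Quotient) := by
  obtain ⟨u, rfl⟩ := h
  refine isUnit_iff_exists.2 ⟨((u⁻¹ : Rˣ) : R), ?_, ?_⟩ <;>
    rw [← RingCon.coe_mul] <;> simp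

include hI in
lemma isUnit_of_isUnit_coe {a : R} (h : IsUnit (a : I.ringCon.Quotient)) : IsUnit a := by
  obtain ⟨u, hu⟩ := h
  obtain ⟨b, hb⟩ : ∃ b : R, (b : I.ringCon.Quotient) = ((u⁻¹ : _) : I.ringCon.Quotient) :=
    Quotient.mk''_surjective _
  have hab : IsUnit (a * b) := by
    have h1 : ((a * b : R) : I.ringCon.Quotient) = ((1 : R) : I.ringCon.Quotient) := by
      rw [RingCon.coe_mul, ← hu, hb, RingCon.coe_one]
      exact u.mul_inv
    have h2 : a * b - 1 ∈ I := (I.rel_iff _ _).mp (I.ringCon.eq.mp h1)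
    have := hI _ h2 (-1)
    simpa using this
  have hba : IsUnit (b * a) := by
    have h1 : ((b * a : R) : I.ringCon.Quotient) = ((1 : R) : I.ringCon.Quotient) := by
      rw [RingCon.coe_mul, ← hu, hb, RingCon.coe_one]
      exact u.inv_mul
    have h2 : b * a - 1 ∈ I := (I.rel_iff _ _).mp (I.ringCon.eq.mp h1)
    have := hI _ h2 (-1)
    simpa using this
  obtain ⟨c, hc⟩ := hab.exists_right_inv
  obtain ⟨c', hc'⟩ := hba.exists_left_inv
  have h1 : a * (b * c) = 1 := by rw [← mul_assoc]; exact hc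
  have h2 : (c' * b) * a = 1 := by rw [mul_assoc]; exact hc'
  have h3 : b * c = c' * b := by
    calc b * c = ((c' * b) * a) * (b * c) := by rw [h2, one_mul]
    _ = (c' * b) * (a * (b * c)) := mul_assoc _ _ _
    _ = c' * b := by rw [h1, mul_one]
  exact isUnit_iff_exists.2 ⟨b * c, h1, by rw [h3]; exact h2⟩

include hI in
lemma isUnit_coe_iff {a : R} : IsUnit (a : I.ringCon.Quotient) ↔ IsUnit a :=
  ⟨isUnit_of_isUnit_coe I hI, isUnit_coe_of_isUnit I⟩

include hI in
lemma mem_delta_coe_iff {a : R} :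
    (a : I.ringCon.Quotient) ∈ Delta I.ringCon.Quotient ↔ a ∈ Delta R := by
  constructor
  · intro h u hu
    have := h u (isUnit_coe_of_isUnit I hu)
    rw [← RingCon.coe_add] at this
    exact isUnit_of_isUnit_coe I hI this
  · intro h v hv
    obtain ⟨c, rfl⟩ := quot_surj I v
    have hc : IsUnit c := isUnit_of_isUnit_coe I hI hv
    have := h c hc
    rw [← RingCon.coe_add]
    exact isUnit_coe_of_isUnit I this

end Aux

/-- For a two-sided ideal `I ⊆ J(R)`, `R` is weakly ΔU iff `R/I` is weakly ΔU.
(Membership in `J(R)` is characterized by: `1 - y * x` is a unit for all `y`.) -/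
theorem stmt_2 (R : Type*) [Ring R] (I : TwoSidedIdeal R)
    (hI : ∀ x ∈ I, ∀ y : R, IsUnit (1 - y * x)) :
    IsWDU R ↔ IsWDU I.ringCon.Quotient := by
  constructor
  · intro h v hv
    obtain ⟨c, rfl⟩ := quot_surj I v
    have hc : IsUnit c := isUnit_of_isUnit_coe I hI hv
    obtain ⟨d, hd, hcd⟩ := h c hc
    refine ⟨(d : I.ringCon.Quotient), (mem_delta_coe_iff I hI).mpr hd, ?_⟩
    rcases hcd with rfl | rfl
    · left; rw [RingCon.coe_add, RingCon.coe_one]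
    · right; rw [RingCon.coe_add, RingCon.coe_neg, RingCon.coe_one]
  · intro h u hu
    have hcu : IsUnit (u : I.ringCon.Quotient) := isUnit_coe_of_isUnit I hu
    obtain ⟨e, he, hue⟩ := h _ hcu
    rcases hue with h1 | h1
    · refine ⟨u - 1, ?_, Or.inl (by abel)⟩
      rw [← mem_delta_coe_iff I hI]
      have : ((u - 1 : R) : I.ringCon.Quotient) = e := by
        rw [RingCon.coe_sub, RingCon.coe_one, h1]; abel
      rwa [this]
    · refine ⟨u + 1, ?_, Or.inr (by abel)⟩
      rw [← mem_delta_coe_iff I hI]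
      have : ((u + 1 : R) : I.ringCon.Quotient) = e := by
        rw [RingCon.coe_add, RingCon.coe_one, h1]; abel
      rwa [this]
end

section
/- If R is a weakly ΔU-ring and S is a ΔU-ring, then the direct product ring R × S is a weakly ΔU-ring. -/
lemma isUnit_prod_iff {R S : Type*} [Ring R] [Ring S] (x : R × S) :
    IsUnit x ↔ IsUnit x.1 ∧ IsUnit x.2 := by
  constructor
  · rintro ⟨u, rfl⟩
    exact ⟨⟨⟨(u : R × S).1, (↑u⁻¹ : R × S).1, congrArg Prod.fst u.mul_inv,
        congrArg Prod.fst u.inv_mul⟩, rfl⟩,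
      ⟨⟨(u : R × S).2, (↑u⁻¹ : R × S).2, congrArg Prod.snd u.mul_inv,
        congrArg Prod.snd u.inv_mul⟩, rfl⟩⟩
  · rintro ⟨⟨a, ha⟩, ⟨b, hb⟩⟩
    exact ⟨⟨((a : R), (b : S)), ((↑a⁻¹ : R), (↑b⁻¹ : S)),
      Prod.ext (by simp) (by simp), Prod.ext (by simp) (by simp)⟩,
      Prod.ext ha hb⟩

lemma delta_neg {R : Type*} [Ring R] {d : R} (hd : d ∈ Delta R) : -d ∈ Delta R := by
  intro u hu
  have := hd (-u) hu.neg
  simpa [add_comm] using this.neg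

lemma delta_add {R : Type*} [Ring R] {d e : R} (hd : d ∈ Delta R) (he : e ∈ Delta R) :
    d + e ∈ Delta R := by
  intro u hu
  have := hd (e + u) (he u hu)
  simpa [add_assoc] using this

/-- If `R` is weakly ΔU and `S` is ΔU, then `R × S` is weakly ΔU. -/
theorem stmt_3 (R S : Type*) [Ring R] [Ring S] (hR : IsWDU R) (hS : IsDU S) :
    IsWDU (R × S) := by
  intro u hu
  rw [isUnit_prod_iff] at hu
  obtain ⟨d₁, hd₁, h1⟩ := hR u.1 hu.1
  obtain ⟨d₂, hd₂, h2⟩ := hS u.2 hu.2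
  have hprod : ∀ a ∈ Delta R, ∀ b ∈ Delta S, ((a, b) : R × S) ∈ Delta (R × S) := by
    intro a ha b hb v hv
    rw [isUnit_prod_iff] at hv ⊢
    exact ⟨ha v.1 hv.1, hb v.2 hv.2⟩
  rcases h1 with h1 | h1
  · exact ⟨(d₁, d₂), hprod _ hd₁ _ hd₂, Or.inl (Prod.ext (by simp [h1]) (by simp [h2]))⟩
  · -- u.2 = -1 + (d₂ + 2), need d₂ + 2 ∈ Delta S
    have h2' : (2 : S) ∈ Delta S := by
      obtain ⟨e, he, hee⟩ := hS (-1) isUnit_one.neg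
      have he2 : e = -2 := by
        have h := eq_sub_of_add_eq' hee.symm
        rw [h]; norm_num
      subst he2
      simpa using delta_neg he
    refine ⟨(d₁, d₂ + 2), hprod _ hd₁ _ (delta_add hd₂ h2'), Or.inr ?_⟩
    refine Prod.ext (by simp [h1]) ?_
    show u.2 = (-1 : S) + (d₂ + 2)
    rw [h2, add_comm d₂ 2, ← add_assoc]; norm_num
end

section
/- Let R be a weakly ΔU-ring and let e ∈ R be an idempotent (e² = e). Then the corner ring eRe = {e·r·e : r ∈ R}, which is a ring under the operations of R with multiplicative identity e, is a weakly ΔU-ring. -/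
/-- The corner ring `eRe = {x : R // e * x * e = x}` associated to an idempotent `e`. -/
def CornerRing {R : Type*} [Ring R] (e : R) (_he : IsIdempotentElem e) : Type _ :=
  {x : R // e * x * e = x}

namespace CornerRing

lemma aux_left {R : Type*} [Ring R] {e x : R} (hee : e * e = e) (hx : e * x * e = x) :
    e * x = x := by
  conv_lhs => rw [← hx]
  rw [← mul_assoc, ← mul_assoc, hee, hx]

lemma aux_right {R : Type*} [Ring R] {e x : R} (hee : e * e = e) (hx : e * x * e = x) :
    x * e = x := by
  conv_lhs => rw [← hx]
  rw [mul_assoc, hee, hx]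

variable {R : Type*} [Ring R] {e : R} {he : IsIdempotentElem e}

instance : Zero (CornerRing e he) := ⟨⟨0, by simp⟩⟩

instance : Add (CornerRing e he) :=
  ⟨fun x y => ⟨x.1 + y.1, by rw [mul_add, add_mul, x.2, y.2]⟩⟩

instance : Neg (CornerRing e he) :=
  ⟨fun x => ⟨-x.1, by rw [mul_neg, neg_mul, x.2]⟩⟩

/-- The identity of the corner ring is `e`. -/
instance : One (CornerRing e he) :=
  ⟨⟨e, by rw [IsIdempotentElem.eq he, IsIdempotentElem.eq he]⟩⟩

instance : Mul (CornerRing e he) :=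
  ⟨fun x y => ⟨x.1 * y.1, by
    rw [← mul_assoc, aux_left he x.2, mul_assoc, aux_right he y.2]⟩⟩

/-- The corner ring is a ring under the operations of `R`, with identity `e`. -/
instance instRing : Ring (CornerRing e he) where
  add_assoc x y z := Subtype.ext (add_assoc x.1 y.1 z.1)
  zero_add x := Subtype.ext (zero_add x.1)
  add_zero x := Subtype.ext (add_zero x.1)
  add_comm x y := Subtype.ext (add_comm x.1 y.1)
  neg_add_cancel x := Subtype.ext (neg_add_cancel x.1)
  nsmul := nsmulRec
  zsmul := zsmulRec
  mul_assoc x y z := Subtype.ext (mul_assoc x.1 y.1 z.1)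
  one_mul x := Subtype.ext (aux_left he x.2)
  mul_one x := Subtype.ext (aux_right he x.2)
  left_distrib x y z := Subtype.ext (left_distrib x.1 y.1 z.1)
  right_distrib x y z := Subtype.ext (right_distrib x.1 y.1 z.1)
  zero_mul x := Subtype.ext (zero_mul x.1)
  mul_zero x := Subtype.ext (mul_zero x.1)

lemma val_add (x y : CornerRing e he) : (x + y).1 = x.1 + y.1 := rfl
lemma val_mul (x y : CornerRing e he) : (x * y).1 = x.1 * y.1 := rfl
lemma val_one : (1 : CornerRing e he).1 = e := rfl
lemma val_neg (x : CornerRing e he) : (-x).1 = -x.1 := rfl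
lemma val_sub (x y : CornerRing e he) : (x - y).1 = x.1 - y.1 := by
  rw [sub_eq_add_neg, sub_eq_add_neg, val_add, val_neg]

lemma mul_f_self (x : CornerRing e he) : x.1 * (1 - e) = 0 := by
  rw [mul_sub, mul_one, aux_right he x.2, sub_self]

lemma f_mul_self (x : CornerRing e he) : (1 - e) * x.1 = 0 := by
  rw [sub_mul, one_mul, aux_left he x.2, sub_self]

lemma key_add {x y : CornerRing e he} (hxy : x * y = 1) :
    (x.1 + (1 - e)) * (y.1 + (1 - e)) = 1 := by
  have h3 : x.1 * y.1 = e := congrArg Subtype.val hxy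
  have h4 : (1 - e) * (1 - e) = 1 - e := (IsIdempotentElem.one_sub he).eq
  calc (x.1 + (1 - e)) * (y.1 + (1 - e))
      = x.1 * y.1 + x.1 * (1 - e) + ((1 - e) * y.1 + (1 - e) * (1 - e)) := by noncomm_ring
    _ = 1 := by rw [mul_f_self, f_mul_self, h3, h4]; abel

lemma key_sub {x y : CornerRing e he} (hxy : x * y = 1) :
    (x.1 - (1 - e)) * (y.1 - (1 - e)) = 1 := by
  have h3 : x.1 * y.1 = e := congrArg Subtype.val hxy
  have h4 : (1 - e) * (1 - e) = 1 - e := (IsIdempotentElem.one_sub he).eq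
  calc (x.1 - (1 - e)) * (y.1 - (1 - e))
      = x.1 * y.1 - x.1 * (1 - e) - ((1 - e) * y.1 - (1 - e) * (1 - e)) := by noncomm_ring
    _ = 1 := by rw [mul_f_self, f_mul_self, h3, h4]; abel

lemma isUnit_iff (x : CornerRing e he) :
    IsUnit x ↔ IsUnit (x.1 + (1 - e)) := by
  constructor
  · intro hx
    obtain ⟨y, hxy, hyx⟩ := isUnit_iff_exists.mp hx
    exact isUnit_iff_exists.mpr ⟨y.1 + (1 - e), key_add hxy, key_add hyx⟩
  · intro hx
    obtain ⟨v, hv1, hv2⟩ := isUnit_iff_exists.mp hx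
    have hxv : x.1 * v = e := by
      have := congrArg (fun t => e * t) hv1
      simp only [mul_one] at this
      calc x.1 * v = (e * x.1 + (e * (1 - e))) * v := by
            rw [aux_left he x.2, mul_sub, mul_one, he.eq, sub_self, add_zero]
        _ = e * ((x.1 + (1 - e)) * v) := by noncomm_ring
        _ = e := by rw [hv1, mul_one]
    have hvx : v * x.1 = e := by
      calc v * x.1 = v * (x.1 * e + ((1 - e) * e)) := by
            rw [aux_right he x.2, sub_mul, one_mul, he.eq, sub_self, add_zero]
        _ = (v * (x.1 + (1 - e))) * e := by noncomm_ring
        _ = e := by rw [hv2, one_mul]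
    refine isUnit_iff_exists.mpr ⟨⟨e * v * e, ?_⟩, ?_, ?_⟩
    · simp only [← mul_assoc]
      rw [he.eq, mul_assoc (e * v), he.eq]
    · apply Subtype.ext
      show x.1 * (e * v * e) = e
      rw [← mul_assoc, ← mul_assoc, aux_right he x.2, hxv, he.eq]
    · apply Subtype.ext
      show (e * v * e) * x.1 = e
      rw [mul_assoc, aux_left he x.2, mul_assoc, hvx, he.eq]

lemma isUnit_sub_f {x : CornerRing e he} (hx : IsUnit x) :
    IsUnit (x.1 - (1 - e)) := by
  obtain ⟨y, hxy, hyx⟩ := isUnit_iff_exists.mp hx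
  exact isUnit_iff_exists.mpr ⟨y.1 - (1 - e), key_sub hxy, key_sub hyx⟩

end CornerRing

/-- If `R` is weakly ΔU and `e` is an idempotent of `R`, then the corner ring
`eRe` is weakly ΔU. -/
theorem stmt_5 (R : Type*) [Ring R] (hR : IsWDU R) (e : R) (he : IsIdempotentElem e) :
    IsWDU (CornerRing e he) := by
  intro u hu
  have huR : IsUnit (u.1 + (1 - e)) := (CornerRing.isUnit_iff u).mp hu
  obtain ⟨d, hd, hcase⟩ := hR _ huR
  rcases hcase with h | h
  · refine ⟨u - 1, ?_, Or.inl ?_⟩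
    · intro v hv
      have hvR : IsUnit (v.1 + (1 - e)) := (CornerRing.isUnit_iff v).mp hv
      rw [CornerRing.isUnit_iff]
      have heq : (u - 1 + v : CornerRing e he).1 + (1 - e) = d + (v.1 + (1 - e)) := by
        rw [CornerRing.val_add, CornerRing.val_sub, CornerRing.val_one,
          eq_sub_of_add_eq h]
        abel
      rw [heq]
      exact hd _ hvR
    · apply Subtype.ext
      simp only [CornerRing.val_add, CornerRing.val_sub, CornerRing.val_one]
      abel
  · refine ⟨u + 1, ?_, Or.inr ?_⟩
    · intro v hv
      have hvR : IsUnit (v.1 - (1 - e)) := CornerRing.isUnit_sub_f hv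
      rw [CornerRing.isUnit_iff]
      have heq : (u + 1 + v : CornerRing e he).1 + (1 - e) = d + (v.1 - (1 - e)) := by
        rw [CornerRing.val_add, CornerRing.val_add, CornerRing.val_one,
          eq_sub_of_add_eq h]
        abel
      rw [heq]
      exact hd _ hvR
    · apply Subtype.ext
      simp only [CornerRing.val_add, CornerRing.val_neg, CornerRing.val_one]
      abel
end

section
/- For any nontrivial ring R and any natural number n ≥ 2, the full n × n matrix ring M_n(R) is not a weakly ΔU-ring. -/
/-! For nilpotent `a`, `b` in a WΔU-ring, write the unit `1 + a` as `ε + d` with `ε = ±1` and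
`d ∈ Δ`; since `ε + b` is again a unit, so is `d + (ε + b) = 1 + a + b`. In `M_n(R)` take
`a = e₀₁` and `b = e₁₀`: then `1 + a + b` has the singular block `[[1, 1], [1, 1]]` and is
killed on the left by `e₀₀ - e₀₁`, so it is not a unit. -/

theorem IsWDU.isUnit_one_add_add {S : Type*} [Ring S] (h : IsWDU S) {a b : S}
    (ha : IsNilpotent a) (hb : IsNilpotent b) : IsUnit (1 + a + b) := by
  obtain ⟨d, hd, hu | hu⟩ := h (1 + a) ha.isUnit_one_add
  · rw [hu, add_assoc, add_left_comm]
    exact hd (1 + b) hb.isUnit_one_add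
  · rw [hu, add_assoc, add_left_comm]
    exact hd (-1 + b) (neg_add_eq_sub 1 b ▸ hb.isUnit_sub_one)

namespace Matrix

variable {ι R : Type*} [Fintype ι] [DecidableEq ι] [Ring R]

theorem isNilpotent_single_of_ne {i j : ι} (hij : i ≠ j) (c : R) :
    IsNilpotent (single i j c) :=
  ⟨2, by rw [pow_two, single_mul_single_of_ne _ _ _ _ hij.symm]⟩

theorem not_isUnit_one_add_single_add_single [Nontrivial R] {i j : ι} (hij : i ≠ j) :
    ¬ IsUnit (1 + single i j (1 : R) + single j i 1) := by
  intro hM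
  have hx : single i i (1 : R) - single i j 1 ≠ 0 := by
    intro h0
    simpa [hij.symm] using congrFun (congrFun h0 i) i
  refine hx (hM.mul_left_eq_zero.mp ?_)
  simp [sub_mul, mul_add, single_mul_single_same, single_mul_single_of_ne, hij, hij.symm]

end Matrix

/-- For a nontrivial ring `R` and `n ≥ 2`, `M_n(R)` is not weakly ΔU. -/
theorem stmt_6 (R : Type*) [Ring R] [Nontrivial R] (n : ℕ) (hn : 2 ≤ n) :
    ¬ IsWDU (Matrix (Fin n) (Fin n) R) := by
  intro h
  have h01 : (⟨0, by omega⟩ : Fin n) ≠ ⟨1, by omega⟩ := by simp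
  exact Matrix.not_isUnit_one_add_single_add_single h01 <|
    h.isUnit_one_add_add (Matrix.isNilpotent_single_of_ne h01 1)
      (Matrix.isNilpotent_single_of_ne h01.symm 1)
end

section
/- Every weakly ΔU-ring is Dedekind-finite, i.e., if R is a weakly ΔU-ring and a, b ∈ R satisfy ab = 1, then ba = 1. -/
/-- Every weakly ΔU-ring is Dedekind-finite. -/
theorem stmt_7 (R : Type*) [Ring R] (h : IsWDU R) :
    ∀ a b : R, a * b = 1 → b * a = 1 := by
  intro a b hab
  set e : R := 1 - b * a with he
  have hae : a * e = 0 := by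
    rw [he, mul_sub, mul_one, ← mul_assoc, hab, one_mul, sub_self]
  have heb : e * b = 0 := by
    rw [he, sub_mul, one_mul, mul_assoc, hab, mul_one, sub_self]
  have hee : e * e = e := by
    nth_rewrite 1 [he]
    rw [sub_mul, one_mul, mul_assoc, hae, mul_zero, sub_zero]
  have K1 : ∀ z : R, a * (b * z) = z := fun z => by rw [← mul_assoc, hab, one_mul]
  have K2 : ∀ z : R, a * (e * z) = 0 := fun z => by rw [← mul_assoc, hae, zero_mul]
  have K3 : ∀ z : R, e * (b * z) = 0 := fun z => by rw [← mul_assoc, heb, zero_mul]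
  have K4 : ∀ z : R, e * (e * z) = e * z := fun z => by rw [← mul_assoc, hee]
  set f : R := b * (e * a) with hf
  set x : R := b * (e * (a * a)) with hx
  set y : R := b * (b * (e * a)) with hy
  have hfx : f * x = x := by
    rw [hf, hx]; simp only [mul_assoc, K1, K2, K3, K4, mul_zero, zero_mul]
  have hfy : f * y = 0 := by
    rw [hf, hy]; simp only [mul_assoc, K1, K2, K3, K4, mul_zero, zero_mul]
  have hxx : x * x = 0 := by
    rw [hx]; simp only [mul_assoc, K1, K2, K3, K4, mul_zero, zero_mul]
  have hxy : x * y = f := by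
    rw [hx, hy, hf]; simp only [mul_assoc, K1, K2, K3, K4, mul_zero, zero_mul]
  have hyy : y * y = 0 := by
    rw [hy]; simp only [mul_assoc, K1, K2, K3, K4, mul_zero, zero_mul]
  have hff : f * f = f := by
    rw [hf]; simp only [mul_assoc, K1, K2, K3, K4, mul_zero, zero_mul]
  have hxf : x * f = 0 := by
    rw [hx, hf]; simp only [mul_assoc, K1, K2, K3, K4, mul_zero, zero_mul]
  -- key annihilation identity
  have hz : (f - x) * (1 + x + y) = 0 := by
    have expand : (f - x) * (1 + x + y)
        = (f * 1 + f * x + f * y) - (x * 1 + x * x + x * y) := by noncomm_ring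
    rw [expand, hfx, hfy, hxx, hxy, mul_one, mul_one]
    abel
  -- 1 + x is a unit
  have hux : IsUnit (1 + x) := by
    refine ⟨⟨1 + x, 1 - x, ?_, ?_⟩, rfl⟩
    · have : (1 + x) * (1 - x) = 1 - x * x := by noncomm_ring
      rw [this, hxx, sub_zero]
    · have : (1 - x) * (1 + x) = 1 - x * x := by noncomm_ring
      rw [this, hxx, sub_zero]
  obtain ⟨d, hd, hc⟩ := h (1 + x) hux
  have hw : IsUnit (1 + x + y) := by
    rcases hc with h1 | h2
    · have hdx : d = x := (add_left_cancel h1).symm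
      have huy : IsUnit (1 + y) := by
        refine ⟨⟨1 + y, 1 - y, ?_, ?_⟩, rfl⟩
        · have : (1 + y) * (1 - y) = 1 - y * y := by noncomm_ring
          rw [this, hyy, sub_zero]
        · have : (1 - y) * (1 + y) = 1 - y * y := by noncomm_ring
          rw [this, hyy, sub_zero]
      have := hd (1 + y) huy
      rwa [hdx, show x + (1 + y) = 1 + x + y from by abel] at this
    · have hdx : d = 2 + x := by
      -- h2 : 1 + x = -1 + d
        have h3 : 1 + (1 + x) = 1 + (-1 + d) := by rw [h2]
        rw [show (1 : R) + (-1 + d) = d from by abel] at h3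
        rw [← h3, ← add_assoc, one_add_one_eq_two]
      have huy : IsUnit (-1 + y) := by
        refine ⟨⟨-1 + y, -1 - y, ?_, ?_⟩, rfl⟩
        · have : (-1 + y) * (-1 - y) = 1 - y * y := by noncomm_ring
          rw [this, hyy, sub_zero]
        · have : (-1 - y) * (-1 + y) = 1 - y * y := by noncomm_ring
          rw [this, hyy, sub_zero]
      have := hd (-1 + y) huy
      rwa [hdx, show (2 : R) + x + (-1 + y) = 1 + x + y from by rw [← one_add_one_eq_two]; abel] at this
  -- conclude f - x = 0, then f = 0, then e = 0
  have hfx0 : f - x = 0 := by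
    obtain ⟨w, hw'⟩ := hw
    rw [← hw'] at hz
    exact (Units.mul_left_eq_zero w).mp hz
  have hf0 : f = 0 := by
    have hzf : (f - x) * f = f := by rw [sub_mul, hff, hxf, sub_zero]
    rw [hfx0, zero_mul] at hzf
    exact hzf.symm
  have he0 : e = 0 := by
    have hafb : a * (f * b) = e := by
      rw [hf]
      simp only [mul_assoc, K1, K2, K3, K4, hab, mul_one, mul_zero, zero_mul]
    rw [hf0, zero_mul, mul_zero] at hafb
    exact hafb.symm
  rw [he] at he0
  rw [sub_eq_zero] at he0
  exact he0.symm
end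

section
/- Let R be a weakly ΔU-ring and let S be a subring of R containing the identity of R. If S ∩ Δ(R) ⊆ Δ(S), then S is a weakly ΔU-ring. In particular, the center C(R) of a weakly ΔU-ring R is a weakly ΔU-ring. -/
lemma subring_wdu (R : Type*) [Ring R] (hR : IsWDU R) (S : Subring R)
    (hS : ∀ s : S, (s : R) ∈ Delta R → s ∈ Delta S) : IsWDU S := by
  intro u hu
  have huR : IsUnit (u : R) := hu.map S.subtype
  obtain ⟨d, hd, hcase⟩ := hR u huR
  rcases hcase with h | h
  · have hdS : d ∈ S := by
      have : d = (u : R) - 1 := by rw [h]; abel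
      rw [this]; exact S.sub_mem u.2 S.one_mem
    refine ⟨⟨d, hdS⟩, hS ⟨d, hdS⟩ hd, Or.inl ?_⟩
    ext; exact h
  · have hdS : d ∈ S := by
      have : d = (u : R) + 1 := by rw [h]; abel
      rw [this]; exact S.add_mem u.2 S.one_mem
    refine ⟨⟨d, hdS⟩, hS ⟨d, hdS⟩ hd, Or.inr ?_⟩
    ext; exact h

lemma center_unit {R : Type*} [Ring R] {x : Subring.center R}
    (hx : IsUnit (x : R)) : IsUnit x := by
  obtain ⟨v, hv⟩ := hx
  have hvc : (↑v⁻¹ : R) ∈ Subring.center R := by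
    rw [Subring.mem_center_iff]
    intro g
    have comm : (↑v : R) * g = g * ↑v := by
      rw [hv]; exact (Subring.mem_center_iff.mp x.2 g).symm
    calc g * ↑v⁻¹ = ↑v⁻¹ * (↑v * g) * ↑v⁻¹ := by
            simp [mul_assoc]
      _ = ↑v⁻¹ * (g * ↑v) * ↑v⁻¹ := by rw [comm]
      _ = ↑v⁻¹ * g := by simp [mul_assoc]
  refine ⟨⟨x, ⟨(↑v⁻¹ : R), hvc⟩, ?_, ?_⟩, rfl⟩
  · ext; simp [← hv]
  · ext; simp [← hv]

/-- If `R` is weakly ΔU and `S` is a unital subring with `S ∩ Δ(R) ⊆ Δ(S)`,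
then `S` is weakly ΔU; in particular the center of `R` is weakly ΔU. -/
theorem stmt_8 (R : Type*) [Ring R] (hR : IsWDU R) :
    (∀ S : Subring R, (∀ s : S, (s : R) ∈ Delta R → s ∈ Delta S) → IsWDU S) ∧
    IsWDU (Subring.center R) := by
  refine ⟨subring_wdu R hR, subring_wdu R hR _ ?_⟩
  intro s hs u hu
  apply center_unit
  push_cast
  exact hs _ (hu.map (Subring.center R).subtype)
end

section
/- A division ring R is a weakly ΔU-ring if and only if R is isomorphic as a ring to ℤ/2ℤ or to ℤ/3ℤ. -/
/-- In a division ring, `Δ(R) = {0}`. -/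
lemma delta_eq_zero {R : Type*} [DivisionRing R] {d : R} (hd : d ∈ Delta R) : d = 0 := by
  by_contra h
  have h1 : IsUnit (-d) := (neg_ne_zero.mpr h).isUnit
  have := hd (-d) h1
  simp at this

/-- A division ring is weakly ΔU iff it is isomorphic to `ZMod 2` or `ZMod 3`. -/
theorem stmt_12 (R : Type*) [DivisionRing R] :
    IsWDU R ↔ (Nonempty (R ≃+* ZMod 2) ∨ Nonempty (R ≃+* ZMod 3)) := by
  constructor
  · intro h
    classical
    have key : ∀ x : R, x = 0 ∨ x = 1 ∨ x = -1 := by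
      intro x
      rcases eq_or_ne x 0 with hx | hx
      · exact Or.inl hx
      · obtain ⟨d, hd, hcase⟩ := h x hx.isUnit
        have : d = 0 := delta_eq_zero hd
        subst this
        rcases hcase with h1 | h1 <;> simp [h1]
    have hfin : Finite R := by
      have hsub : (Set.univ : Set R) ⊆ {0, 1, -1} := by
        intro x _
        rcases key x with h1 | h1 | h1 <;> simp [h1]
      have := Set.Finite.subset (Set.toFinite ({0, 1, -1} : Set R)) hsub
      exact Set.finite_univ_iff.mp this
    have : Fintype R := Fintype.ofFinite R
    rcases eq_or_ne (1 : R) (-1) with h2 | h2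
    · left
      have hcard : Fintype.card R = 2 := by
        have hnm : (0 : R) ∉ ({1} : Finset R) := by
          simp [zero_ne_one]
        have huniv : (Finset.univ : Finset R) = insert (0 : R) ({1} : Finset R) := by
          ext x
          simp only [Finset.mem_insert, Finset.mem_singleton, Finset.mem_univ, true_iff]
          rcases key x with h1 | h1 | h1
          · exact Or.inl h1
          · exact Or.inr h1
          · exact Or.inr (by rw [h1, ← h2])
        rw [← Finset.card_univ, huniv, Finset.card_insert_of_notMem hnm,
          Finset.card_singleton]
      exact ⟨(ZMod.ringEquivOfPrime R Nat.prime_two hcard).symm⟩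
    · right
      have hcard : Fintype.card R = 3 := by
        have hnm1 : (1 : R) ∉ ({-1} : Finset R) := by
          simpa using h2
        have hnm0 : (0 : R) ∉ insert (1 : R) ({-1} : Finset R) := by
          simp only [Finset.mem_insert, Finset.mem_singleton]
          push_neg
          exact ⟨fun h0 => zero_ne_one h0, fun h0 => one_ne_zero (neg_eq_zero.mp h0.symm)⟩
        have huniv : (Finset.univ : Finset R) =
            insert (0 : R) (insert (1 : R) ({-1} : Finset R)) := by
          ext x
          simp only [Finset.mem_insert, Finset.mem_singleton, Finset.mem_univ, true_iff]
          exact key x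
        rw [← Finset.card_univ, huniv, Finset.card_insert_of_notMem hnm0,
          Finset.card_insert_of_notMem hnm1, Finset.card_singleton]
      exact ⟨(ZMod.ringEquivOfPrime R Nat.prime_three hcard).symm⟩
  · intro h
    have hzero : (0 : R) ∈ Delta R := by
      intro u hu; simpa using hu
    rcases h with he | he
    · obtain ⟨e⟩ := he
      intro u hu
      refine ⟨0, hzero, Or.inl ?_⟩
      have hne : e u ≠ 0 := by
        simp only [ne_eq, map_eq_zero_iff e e.injective]
        exact hu.ne_zero
      have h1 : ∀ x : ZMod 2, x ≠ 0 → x = 1 := by decide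
      have : e u = 1 := h1 _ hne
      apply e.injective
      simpa using this
    · obtain ⟨e⟩ := he
      intro u hu
      have hne : e u ≠ 0 := by
        simp only [ne_eq, map_eq_zero_iff e e.injective]
        exact hu.ne_zero
      have h1 : ∀ x : ZMod 3, x ≠ 0 → x = 1 ∨ x = -1 := by decide
      rcases h1 _ hne with h3 | h3
      · refine ⟨0, hzero, Or.inl ?_⟩
        apply e.injective
        simpa using h3
      · refine ⟨0, hzero, Or.inr ?_⟩
        apply e.injective
        simpa using h3
end

section
/- Every weakly Δ-clean ring is a weakly ΔU-ring. -/
/-- `R` is weakly Δ-clean: each `a` is `e + d` or `-e + d` with `e` idempotent, `d ∈ Δ(R)`. -/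
def IsWeaklyDeltaClean (R : Type*) [Ring R] : Prop :=
  ∀ a : R, ∃ e d : R, IsIdempotentElem e ∧ d ∈ Delta R ∧ (a = e + d ∨ a = -e + d)

/-- Every weakly Δ-clean ring is a weakly ΔU-ring. -/
theorem stmt_13 (R : Type*) [Ring R] (h : IsWeaklyDeltaClean R) : IsWDU R := by
  intro u hu
  obtain ⟨e, d, he, hd, hcase⟩ := h u
  have hsub : ∀ v : R, IsUnit v → IsUnit (v - d) := by
    intro v hv
    have h1 := hd (-v) hv.neg
    have h2 : IsUnit (-(d + -v)) := h1.neg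
    simpa [neg_add, sub_eq_add_neg, add_comm] using h2
  have key : IsUnit e → e = 1 := by
    intro hue
    exact hue.mul_left_cancel (by rw [he, mul_one])
  refine ⟨d, hd, ?_⟩
  rcases hcase with h1 | h1
  · left
    have hue : IsUnit e := by
      have := hsub u hu
      rwa [h1, add_sub_cancel_right] at this
    rw [h1, key hue]
  · right
    have hue : IsUnit e := by
      have := hsub u hu
      rw [h1, add_sub_cancel_right] at this
      simpa using this.neg
    rw [h1, key hue]
end

section
/- Every weakly Δ-clean ring is clean, i.e., if R is weakly Δ-clean, then every element of R is the sum of an idempotent and a unit. -/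
/-- Every weakly Δ-clean ring is clean. -/
theorem stmt_14 (R : Type*) [Ring R] (h : IsWeaklyDeltaClean R) :
    ∀ a : R, ∃ e u : R, IsIdempotentElem e ∧ IsUnit u ∧ a = e + u := by
  intro a
  obtain ⟨e, d, he, hd, hcase⟩ := h a
  rcases hcase with rfl | rfl
  · have he' : e * e = e := he
    have hmul : (2 * e - 1) * (2 * e - 1) = 1 := by
      calc (2 * e - 1) * (2 * e - 1)
          = 4 * (e * e) - 4 * e + 1 := by noncomm_ring
        _ = 1 := by rw [he']; abel
    have hu2 : IsUnit (2 * e - 1) := ⟨⟨2 * e - 1, 2 * e - 1, hmul, hmul⟩, rfl⟩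
    refine ⟨1 - e, d + (2 * e - 1), he.one_sub, hd _ hu2, by noncomm_ring⟩
  · refine ⟨1 - e, d + (-1), he.one_sub, hd _ isUnit_one.neg, by noncomm_ring⟩
end

section
/- A ring R is both clean and a weakly ΔU-ring if and only if R is weakly Δ-clean. -/
section Aux

variable {R : Type*} [Ring R]

lemma wdc_delta_neg {d : R} (hd : d ∈ Delta R) : -d ∈ Delta R := by
  intro u hu
  have h := (hd (-u) hu.neg).neg
  rwa [show -(d + -u) = -d + u from by abel] at h

lemma wdc_delta_add {d1 d2 : R} (h1 : d1 ∈ Delta R) (h2 : d2 ∈ Delta R) :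
    d1 + d2 ∈ Delta R := by
  intro u hu
  have h := h1 (d2 + u) (h2 u hu)
  rwa [← add_assoc] at h

lemma wdc_delta_sub {d1 d2 : R} (h1 : d1 ∈ Delta R) (h2 : d2 ∈ Delta R) :
    d1 - d2 ∈ Delta R := by
  rw [sub_eq_add_neg]; exact wdc_delta_add h1 (wdc_delta_neg h2)

lemma wdc_delta_unit_mul {v d : R} (hv : IsUnit v) (hd : d ∈ Delta R) : v * d ∈ Delta R := by
  obtain ⟨w, rfl⟩ := hv
  intro u hu
  have h := hd ((↑w⁻¹ : R) * u) ((Units.isUnit w⁻¹).mul hu)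
  have hx : (w : R) * d + u = ↑w * (d + ↑w⁻¹ * u) := by
    rw [mul_add, ← mul_assoc, Units.mul_inv, one_mul]
  rw [hx]; exact w.isUnit.mul h

lemma wdc_unit_one_sub {e : R} (he : IsIdempotentElem e) : IsUnit (1 - (e + e)) := by
  have hx : (1 - (e + e)) * (1 - (e + e)) = 1 := by
    calc (1 - (e+e)) * (1 - (e+e))
        = 1 - (e+e+e+e) + ((e*e) + (e*e) + (e*e) + (e*e)) := by noncomm_ring
      _ = 1 := by rw [he.eq]; abel
  exact ⟨⟨_, _, hx, hx⟩, rfl⟩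

lemma wdc_idem_zero {e : R} (he : IsIdempotentElem e) (h : IsUnit (e - 1)) : e = 0 := by
  apply h.mul_left_cancel
  rw [mul_zero, sub_mul, one_mul, he.eq, sub_self]

lemma wdc_idem_one {e : R} (he : IsIdempotentElem e) (h : IsUnit e) : e = 1 := by
  apply h.mul_left_cancel
  rw [mul_one, he.eq]

/-- For an idempotent `e`, either `2e ∈ Δ` or `2 - 2e ∈ Δ`. -/
lemma wdc_dichotomy {e : R} (he : IsIdempotentElem e) (hw : IsWDU R) :
    e + e ∈ Delta R ∨ (1 + 1) - (e + e) ∈ Delta R := by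
  obtain ⟨d, hd, h | h⟩ := hw (1 - (e + e)) (wdc_unit_one_sub he)
  · left
    have hne : -(e + e) = d := by
      rw [show -(e+e) = (1 - (e+e)) - 1 from by abel, h]; abel
    have h2 := wdc_delta_neg hd
    rw [← hne, neg_neg] at h2
    exact h2
  · right
    have hq : (1 + 1 : R) - (e + e) = d := by
      rw [show (1+1:R) - (e+e) = (1 - (e+e)) + 1 from by abel, h]; abel
    rw [hq]; exact hd

/-- If `4 ∈ Δ` then (in a WΔU ring) `2 ∈ Δ`. -/
lemma wdc_two_of_four (hw : IsWDU R) (h4 : (1 + 1 + 1 + 1 : R) ∈ Delta R) :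
    (1 + 1 : R) ∈ Delta R := by
  intro u hu
  obtain ⟨d, hd, h | h⟩ := hw u hu
  · have h3 : IsUnit ((1 : R) + 1 + 1) := by
      have hx := h4 (-1) isUnit_one.neg
      rwa [show (1:R) + 1 + 1 + 1 + -1 = 1 + 1 + 1 from by abel] at hx
    have hx := hd _ h3
    rwa [show (1:R) + 1 + u = d + (1 + 1 + 1) from by rw [h]; abel]
  · have hx := hd 1 isUnit_one
    rwa [show (1:R) + 1 + u = d + 1 from by rw [h]; abel]

/-- In a clean WΔU ring, `2 ∈ Δ` or `6 ∈ Δ`. -/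
lemma wdc_two_or_six
    (hclean : ∀ a : R, ∃ e u : R, IsIdempotentElem e ∧ IsUnit u ∧ a = e + u)
    (hw : IsWDU R) :
    (1 + 1 : R) ∈ Delta R ∨ (1 + 1 + 1 + 1 + 1 + 1 : R) ∈ Delta R := by
  obtain ⟨e, u, he, hu, h3⟩ := hclean (1 + 1 + 1)
  obtain ⟨d, hd, h | h⟩ := hw u hu
  · -- u = 1 + d, so e = 2 - d; then e - 1 = 1 - d is a unit, so e = 0 and d = 2.
    have h3' : (1 + 1 + 1 : R) = e + (1 + d) := by rw [h3, h]
    have heq : e = (1 + 1) - d := by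
      rw [show e = (e + (1 + d)) - (1 + d) from by abel, ← h3']; abel
    have hunit : IsUnit (e - 1) := by
      rw [show e - 1 = -(d + -1) from by rw [heq]; abel]
      exact (hd (-1) isUnit_one.neg).neg
    have he0 : e = 0 := wdc_idem_zero he hunit
    left
    have hd2 : d = (1 + 1 : R) := by
      rw [he0] at heq
      rw [show d = (1 + 1) - ((1 + 1) - d) from by abel, ← heq]; abel
    rw [hd2] at hd; exact hd
  · -- u = -1 + d, so e = 4 - d.
    have h3' : (1 + 1 + 1 : R) = e + (-1 + d) := by rw [h3, h]
    have he4 : e = (1 + 1 + 1 + 1) - d := by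
      rw [show e = (e + (-1 + d)) - (-1 + d) from by abel, ← h3']; abel
    rcases wdc_dichotomy he hw with hA | hB
    · -- 2e ∈ Δ; then e - 3 = 1 - d is a unit and (e-3)e = -2e ∈ Δ, hence e ∈ Δ, so e = 0, d = 4.
      have hu3 : IsUnit (e - (1 + 1 + 1)) := by
        rw [show e - (1 + 1 + 1) = -(d + -1) from by rw [he4]; abel]
        exact (hd (-1) isUnit_one.neg).neg
      have hprod : (e - (1 + 1 + 1)) * e = -(e + e) := by
        have hx : (e - (1 + 1 + 1)) * e = e * e - (e + e + e) := by noncomm_ring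
        rw [hx, he.eq]; abel
      obtain ⟨w, hwe⟩ := hu3
      have hemem : e ∈ Delta R := by
        have h5 : e = ↑w⁻¹ * (-(e + e)) := by
          rw [← hprod, ← hwe, ← mul_assoc, Units.inv_mul, one_mul]
        rw [h5]
        exact wdc_delta_unit_mul w⁻¹.isUnit (wdc_delta_neg hA)
      have hunit : IsUnit (e - 1) := by
        rw [sub_eq_add_neg]
        exact hemem (-1) isUnit_one.neg
      have he0 : e = 0 := wdc_idem_zero he hunit
      have hd4 : d = (1 + 1 + 1 + 1 : R) := by
        rw [he0] at he4
        rw [show d = (1+1+1+1) - ((1+1+1+1) - d) from by abel, ← he4]; abel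
      rw [hd4] at hd
      exact Or.inl (wdc_two_of_four hw hd)
    · -- 2 - 2e ∈ Δ; then 6 = 2d - (2 - 2e) ∈ Δ.
      right
      have hsix : (1 + 1 + 1 + 1 + 1 + 1 : R) = (d + d) - ((1 + 1) - (e + e)) := by
        rw [he4]; abel
      rw [hsix]
      exact wdc_delta_sub (wdc_delta_add hd hd) hB

end Aux

/-- `R` is clean and weakly ΔU iff `R` is weakly Δ-clean. -/
theorem stmt_16 (R : Type*) [Ring R] :
    ((∀ a : R, ∃ e u : R, IsIdempotentElem e ∧ IsUnit u ∧ a = e + u) ∧ IsWDU R) ↔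
      IsWeaklyDeltaClean R := by
  constructor
  · rintro ⟨hclean, hw⟩
    rcases wdc_two_or_six hclean hw with h2 | h6
    · -- 2 ∈ Δ: clean a - 1.
      intro a
      obtain ⟨e, u, he, hu, ha⟩ := hclean (a - 1)
      obtain ⟨d, hd, h | h⟩ := hw u hu
      · refine ⟨e, (1 + 1) + d, he, wdc_delta_add h2 hd, Or.inl ?_⟩
        rw [h] at ha
        rw [show a = (a - 1) + 1 from by abel, ha]; abel
      · refine ⟨e, d, he, hd, Or.inl ?_⟩
        rw [h] at ha
        rw [show a = (a - 1) + 1 from by abel, ha]; abel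
    · -- 6 ∈ Δ
      intro a
      obtain ⟨e, u, he, hu, ha⟩ := hclean a
      obtain ⟨d, hd, h | h⟩ := hw u hu
      · -- u = 1 + d
        rcases wdc_dichotomy he hw with hA | hB
        · refine ⟨1 - e, (e + e) + d, he.one_sub, wdc_delta_add hA hd, Or.inl ?_⟩
          rw [ha, h]; abel
        · obtain ⟨g, w, hg, hwu, hag⟩ := hclean (a + 1)
          obtain ⟨d2, hd2, h2' | h2'⟩ := hw w hwu
          · refine ⟨g, d2, hg, hd2, Or.inl ?_⟩
            rw [show a = (a + 1) - 1 from by abel, hag, h2']; abel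
          · rcases wdc_dichotomy hg hw with hA2 | hB2
            · -- derive 2 ∈ Δ
              have h1 : a = e + (1 + d) := by rw [ha, h]
              have h2g : a + 1 = g + (-1 + d2) := by rw [hag, h2']
              have hd' : d = a - e - 1 := by rw [h1]; abel
              have hd2' : d2 = a + 1 - g + 1 := by rw [h2g]; abel
              have key : d2 - d = e - g + (1 + 1 + 1) := by rw [hd', hd2']; abel
              have h2mem : (1 + 1 : R) ∈ Delta R := by
                have m1 : (d2 - d) + (d2 - d) +
                    (((1 + 1) - (e + e)) + ((g + g) + -(1 + 1 + 1 + 1 + 1 + 1))) ∈ Delta R :=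
                  wdc_delta_add (wdc_delta_add (wdc_delta_sub hd2 hd) (wdc_delta_sub hd2 hd))
                    (wdc_delta_add hB (wdc_delta_add hA2 (wdc_delta_neg h6)))
                rwa [show (1 + 1 : R) = (d2 - d) + (d2 - d) +
                    (((1 + 1) - (e + e)) + ((g + g) + -(1 + 1 + 1 + 1 + 1 + 1)))
                  from by rw [key]; abel]
              refine ⟨g, d2 - (1 + 1), hg, wdc_delta_sub hd2 h2mem, Or.inl ?_⟩
              rw [show a = (a + 1) - 1 from by abel, hag, h2']; abel
            · refine ⟨g, d2 - ((1 + 1) - (g + g)), hg, wdc_delta_sub hd2 hB2, Or.inr ?_⟩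
              rw [show a = (a + 1) - 1 from by abel, hag, h2']; abel
      · -- u = -1 + d
        refine ⟨1 - e, d, he.one_sub, hd, Or.inr ?_⟩
        rw [ha, h]; abel
  · intro h
    constructor
    · -- clean
      intro a
      obtain ⟨e, d, he, hd, hc | hc⟩ := h a
      · refine ⟨1 - e, (e + e - 1) + d, he.one_sub, ?_, ?_⟩
        · rw [show (e + e - 1) + d = d + (e + e - 1) from by abel]
          apply hd
          rw [show e + e - 1 = -(1 - (e + e)) from by abel]
          exact (wdc_unit_one_sub he).neg
        · rw [hc]; abel
      · refine ⟨1 - e, -1 + d, he.one_sub, ?_, ?_⟩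
        · rw [show (-1 : R) + d = d + -1 from by abel]
          exact hd (-1) isUnit_one.neg
        · rw [hc]; abel
    · -- WΔU
      intro u hu
      obtain ⟨e, d, he, hd, hc | hc⟩ := h u
      · have heu : IsUnit e := by
          rw [show e = -d + u from by rw [hc]; abel]
          exact (wdc_delta_neg hd) u hu
        have he1 := wdc_idem_one he heu
        exact ⟨d, hd, Or.inl (by rw [hc, he1])⟩
      · have heu : IsUnit e := by
          rw [show e = d + -u from by rw [hc]; abel]
          exact hd (-u) hu.neg
        have he1 := wdc_idem_one he heu
        exact ⟨d, hd, Or.inr (by rw [hc, he1])⟩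
end

section
/- For any ring R, the formal power series ring R[[x]] is a weakly ΔU-ring if and only if R is a weakly ΔU-ring. -/
/-! A power series is a unit iff its constant term is, and `constantCoeff` is split by `C`;
hence `Δ(R[[x]])` is exactly the preimage of `Δ(R)`, and the unit `u` of the WΔU condition
can be moved back and forth between `R` and `R[[x]]` along `C` and `constantCoeff`. -/

theorem isWDU_iff {R : Type*} [Ring R] :
    IsWDU R ↔ ∀ u : R, IsUnit u → u - 1 ∈ Delta R ∨ u + 1 ∈ Delta R := by
  refine forall₂_congr fun u _ => ⟨?_, ?_⟩
  · rintro ⟨d, hd, rfl | rfl⟩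
    · left; simpa using hd
    · right; simpa using hd
  · rintro (hd | hd)
    · exact ⟨u - 1, hd, Or.inl (by abel)⟩
    · exact ⟨u + 1, hd, Or.inr (by abel)⟩

namespace PowerSeries

variable {R : Type*} [Ring R]

theorem mem_delta_iff_constantCoeff {f : PowerSeries R} :
    f ∈ Delta (PowerSeries R) ↔ constantCoeff f ∈ Delta R := by
  constructor
  · intro hf v hv
    have hunit := hf (C v) (isUnit_iff_constantCoeff.mpr (by simpa using hv))
    simpa using isUnit_iff_constantCoeff.mp hunit
  · intro hf u hu
    rw [isUnit_iff_constantCoeff, map_add]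
    exact hf _ (isUnit_iff_constantCoeff.mp hu)

theorem C_mem_delta_iff {r : R} : C r ∈ Delta (PowerSeries R) ↔ r ∈ Delta R := by
  simp [mem_delta_iff_constantCoeff]

end PowerSeries

/-- `R[[x]]` is weakly ΔU iff `R` is weakly ΔU. -/
theorem stmt_18 (R : Type*) [Ring R] :
    IsWDU (PowerSeries R) ↔ IsWDU R := by
  simp only [isWDU_iff]
  constructor
  · intro h u hu
    have hC := h (PowerSeries.C u) (PowerSeries.isUnit_iff_constantCoeff.mpr (by simpa using hu))
    simpa only [← map_one PowerSeries.C, ← map_sub, ← map_add, PowerSeries.C_mem_delta_iff]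
      using hC
  · intro h f hf
    have hc := h _ (PowerSeries.isUnit_iff_constantCoeff.mp hf)
    simpa only [PowerSeries.mem_delta_iff_constantCoeff, map_sub, map_add, map_one] using hc
end

section
/- Let R be a ring and M an R-bimodule. The trivial extension T(R, M) (the ring of pairs (r, m) with componentwise addition and multiplication (r, m)(s, n) = (rs, rn + ms)) is a weakly ΔU-ring if and only if R is a weakly ΔU-ring. -/
lemma mem_delta_tsze {R M : Type*} [Ring R] [AddCommGroup M] [Module R M] [Module Rᵐᵒᵖ M]
    [SMulCommClass R Rᵐᵒᵖ M] (x : TrivSqZeroExt R M) :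
    x ∈ Delta (TrivSqZeroExt R M) ↔ x.fst ∈ Delta R := by
  constructor
  · intro h u hu
    have := h (TrivSqZeroExt.inl u) (by simpa using hu)
    rw [TrivSqZeroExt.isUnit_iff_isUnit_fst] at this
    simpa using this
  · intro h u hu
    rw [TrivSqZeroExt.isUnit_iff_isUnit_fst]
    rw [TrivSqZeroExt.isUnit_iff_isUnit_fst] at hu
    exact h u.fst hu

/-- The trivial extension `T(R, M)` is weakly ΔU iff `R` is weakly ΔU. -/
theorem stmt_19 (R M : Type*) [Ring R] [AddCommGroup M] [Module R M] [Module Rᵐᵒᵖ M]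
    [SMulCommClass R Rᵐᵒᵖ M] :
    IsWDU (TrivSqZeroExt R M) ↔ IsWDU R := by
  constructor
  · intro h u hu
    obtain ⟨d, hd, hcase⟩ := h (TrivSqZeroExt.inl u) (by simpa using hu)
    refine ⟨d.fst, (mem_delta_tsze d).1 hd, ?_⟩
    rcases hcase with hc | hc
    · left
      have := congrArg TrivSqZeroExt.fst hc
      simpa using this
    · right
      have := congrArg TrivSqZeroExt.fst hc
      simpa using this
  · intro h u hu
    rw [TrivSqZeroExt.isUnit_iff_isUnit_fst] at hu
    obtain ⟨d, hd, hcase⟩ := h u.fst hu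
    rcases hcase with hc | hc
    · refine ⟨u - 1, ?_, Or.inl (by abel)⟩
      rw [mem_delta_tsze]
      simpa [hc] using hd
    · refine ⟨u + 1, ?_, Or.inr (by abel)⟩
      rw [mem_delta_tsze]
      have : u.fst + 1 = d := by rw [hc]; abel
      simpa [this] using hd
end
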